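/- arXiv:2010.11871 — 5 statements merged into one kernel-verified Lean document; each statement's English description precedes it below -/
import Mathlib

section
/- Let N ≥ 1 and let Y be an N×N real matrix all of whose entries are strictly positive. Then there exist diagonal N×N matrices D₁ and D₂ with strictly positive diagonal entries such that the matrix D₁ · Y · D₂ is doubly stochastic. -/
/-!
For positive `v` let `g v = ∑ i, log (Y v)ᵢ - ∑ j, log vⱼ`; it is what remains of
`∑ i j, Yᵢⱼ uᵢ vⱼ - ∑ log uᵢ - ∑ log vⱼ` after minimising over `u`, at `u = 1 / (Y v)`.
Since `g` is invariant under scaling `v`, it suffices to look at `v` with `∑ vⱼ = 1`, and there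
`g v ≥ N log ε - log vₖ` with `ε` the least entry of `Y`. So `g` attains its minimum over the
positive orthant in a compact box. At a minimiser `p` the partial derivatives vanish, which says
`pⱼ ∑ i, Yᵢⱼ / (Y p)ᵢ = 1`: the column sums of `diag (1 / Y p) * Y * diag p` are `1`, and its row
sums are `1` by the choice of the left scaling.
-/

def IsDoublyStochastic {N : ℕ} (B : Matrix (Fin N) (Fin N) ℝ) : Prop :=
  (∀ i j, 0 ≤ B i j) ∧ (∀ i, ∑ j, B i j = 1) ∧ (∀ j, ∑ i, B i j = 1)

open Real Finset

namespace Matrix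

variable {ι : Type*} [Fintype ι] {Y : Matrix ι ι ℝ}

noncomputable def sinkhornPotential (Y : Matrix ι ι ℝ) (v : ι → ℝ) : ℝ :=
  ∑ i, log ((Y *ᵥ v) i) - ∑ j, log (v j)

theorem mulVec_pos (hY : ∀ i j, 0 < Y i j) {v : ι → ℝ} (hv : ∀ j, 0 < v j) (i : ι) :
    0 < (Y *ᵥ v) i :=
  Finset.sum_pos (fun j _ => mul_pos (hY i j) (hv j)) ⟨i, mem_univ i⟩

theorem sinkhornPotential_smul (hY : ∀ i j, 0 < Y i j) {v : ι → ℝ} (hv : ∀ j, 0 < v j)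
    {c : ℝ} (hc : 0 < c) : sinkhornPotential Y (c • v) = sinkhornPotential Y v := by
  have hYv := mulVec_pos hY hv
  simp only [sinkhornPotential, mulVec_smul, Pi.smul_apply, smul_eq_mul,
    log_mul hc.ne' (hYv _).ne', log_mul hc.ne' (hv _).ne', sum_add_distrib]
  ring

theorem card_mul_log_sub_log_le_sinkhornPotential {ε : ℝ} (hε : 0 < ε) (hY : ∀ i j, ε ≤ Y i j)
    {v : ι → ℝ} (hv : ∀ j, 0 < v j) (hv_sum : ∑ j, v j = 1) (k : ι) :
    Fintype.card ι * log ε - log (v k) ≤ sinkhornPotential Y v := by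
  have hmulVec : ∀ i, ε ≤ (Y *ᵥ v) i := fun i => calc
    ε = ∑ j, ε * v j := by rw [← mul_sum, hv_sum, mul_one]
    _ ≤ (Y *ᵥ v) i := sum_le_sum fun j _ => mul_le_mul_of_nonneg_right (hY i j) (hv j).le
  have hlog_le : ∀ j, log (v j) ≤ 0 := fun j =>
    log_nonpos (hv j).le (hv_sum ▸ single_le_sum (fun j _ => (hv j).le) (mem_univ j))
  have hsum_log : ∑ j, log (v j) ≤ log (v k) := by
    classical
    rw [← add_sum_erase _ _ (mem_univ k)]
    linarith [sum_nonpos fun j (_ : j ∈ univ.erase k) => hlog_le j]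
  have hsum_mulVec : Fintype.card ι * log ε ≤ ∑ i, log ((Y *ᵥ v) i) := by
    simpa using sum_le_sum fun i (_ : i ∈ univ) => log_le_log hε (hmulVec i)
  unfold sinkhornPotential
  linarith

theorem continuousOn_sinkhornPotential (hY : ∀ i j, 0 < Y i j) :
    ContinuousOn (sinkhornPotential Y) {v | ∀ j, 0 < v j} := by
  refine ContinuousOn.sub (continuousOn_finsetSum _ fun i _ => ?_)
    (continuousOn_finsetSum _ fun j _ => ?_)
  · exact ((continuous_apply i).comp (Y.mulVecLin.continuous_of_finiteDimensional)).continuousOn.log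
      fun v hv => (mulVec_pos hY hv i).ne'
  · exact (continuous_apply j).continuousOn.log fun v hv => (hv j).ne'

theorem exists_isMinOn_sinkhornPotential (hY : ∀ i j, 0 < Y i j) :
    ∃ p, IsMinOn (sinkhornPotential Y) {v | ∀ j, 0 < v j} p ∧ ∀ j, 0 < p j := by
  rcases isEmpty_or_nonempty ι with hι | hι
  · exact ⟨1, fun w _ => by simp [sinkhornPotential], isEmptyElim⟩
  obtain ⟨⟨i₀, j₀⟩, hε_le⟩ := Finite.exists_min fun ij : ι × ι => Y ij.1 ij.2
  set ε := Y i₀ j₀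
  have hcard : (0 : ℝ) < Fintype.card ι := Nat.cast_pos.mpr Fintype.card_pos
  set u₀ : ι → ℝ := fun _ => (Fintype.card ι : ℝ)⁻¹
  have hu₀ : ∀ j, 0 < u₀ j := fun _ => inv_pos.mpr hcard
  have hu₀_sum : ∑ j, u₀ j = 1 := by simp [u₀, hcard.ne']
  set δ := exp (Fintype.card ι * log ε - sinkhornPotential Y u₀)
  have hδ_le : ∀ v : ι → ℝ, (∀ j, 0 < v j) → ∑ j, v j = 1 →
      sinkhornPotential Y v ≤ sinkhornPotential Y u₀ → ∀ k, δ ≤ v k := fun v hv hv_sum hle k => by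
    rw [← exp_log (hv k)]
    have := card_mul_log_sub_log_le_sinkhornPotential (hY i₀ j₀) (fun i j => hε_le (i, j))
      hv hv_sum k
    exact exp_le_exp.mpr (by linarith)
  set K : Set (ι → ℝ) := Set.Icc (fun _ => δ) 1
  have hK_pos : K ⊆ {v | ∀ j, 0 < v j} := fun v hv j => (exp_pos _).trans_le (hv.1 j)
  have hu₀K : u₀ ∈ K := ⟨hδ_le u₀ hu₀ hu₀_sum le_rfl, fun _ =>
    inv_le_one_of_one_le₀ (Nat.one_le_cast.mpr Fintype.card_pos)⟩
  obtain ⟨p, hpK, hp⟩ := isCompact_Icc.exists_isMinOn ⟨u₀, hu₀K⟩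
    ((continuousOn_sinkhornPotential hY).mono hK_pos)
  refine ⟨p, fun w hw => ?_, hK_pos hpK⟩
  have hS : 0 < ∑ j, w j := sum_pos (fun j _ => hw j) univ_nonempty
  set v := (∑ j, w j)⁻¹ • w
  have hv : ∀ j, 0 < v j := fun j => mul_pos (inv_pos.mpr hS) (hw j)
  have hv_sum : ∑ j, v j = 1 := by simp [v, ← mul_sum, hS.ne']
  have hv_le : ∀ j, v j ≤ 1 := fun j => hv_sum ▸ single_le_sum (fun j _ => (hv j).le) (mem_univ j)
  show sinkhornPotential Y p ≤ sinkhornPotential Y w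
  rw [← sinkhornPotential_smul hY hw (inv_pos.mpr hS)]
  by_cases hle : sinkhornPotential Y v ≤ sinkhornPotential Y u₀
  · exact hp ⟨hδ_le v hv hv_sum hle, hv_le⟩
  · exact (hp hu₀K).trans (le_of_not_ge hle)

theorem exists_pos_isLocalMin_sinkhornPotential (hY : ∀ i j, 0 < Y i j) :
    ∃ p, IsLocalMin (sinkhornPotential Y) p ∧ ∀ j, 0 < p j := by
  obtain ⟨p, hmin, hp⟩ := exists_isMinOn_sinkhornPotential hY
  have hopen : IsOpen {v : ι → ℝ | ∀ j, 0 < v j} := by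
    simpa only [Set.ofPred_forall] using
      isOpen_iInter_of_finite fun j => isOpen_lt continuous_const (continuous_apply j)
  exact ⟨p, hmin.isLocalMin (hopen.mem_nhds hp), hp⟩

theorem hasDerivAt_sinkhornPotential_add_smul (hY : ∀ i j, 0 < Y i j) {p : ι → ℝ}
    (hp : ∀ j, 0 < p j) (d : ι → ℝ) :
    HasDerivAt (fun t : ℝ => sinkhornPotential Y (p + t • d))
      (∑ i, (Y *ᵥ d) i / (Y *ᵥ p) i - ∑ j, d j / p j) 0 := by
  have hlog : ∀ a b : ℝ, a ≠ 0 → HasDerivAt (fun t => log (a + t * b)) (b / a) 0 :=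
    fun a b ha => by simpa using (((hasDerivAt_id (0 : ℝ)).mul_const b).const_add a).log (by simpa)
  simp only [sinkhornPotential, mulVec_add, mulVec_smul, Pi.add_apply, Pi.smul_apply, smul_eq_mul]
  exact (HasDerivAt.fun_sum fun i _ => hlog _ _ (mulVec_pos hY hp i).ne').sub
    (HasDerivAt.fun_sum fun j _ => hlog _ _ (hp j).ne')

theorem mul_sum_div_mulVec_eq_one_of_isLocalMin (hY : ∀ i j, 0 < Y i j) {p : ι → ℝ}
    (hmin : IsLocalMin (sinkhornPotential Y) p) (hp : ∀ j, 0 < p j) (j : ι) :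
    p j * ∑ i, Y i j / (Y *ᵥ p) i = 1 := by
  classical
  have hmin' : IsLocalMin (sinkhornPotential Y) (p + (0 : ℝ) • Pi.single j 1) := by
    rwa [zero_smul, add_zero]
  have hline := hmin'.comp_continuous (g := fun t : ℝ => p + t • Pi.single j 1) (b := 0)
    (by fun_prop)
  have hcrit := hline.hasDerivAt_eq_zero (hasDerivAt_sinkhornPotential_add_smul hY hp _)
  simp only [mulVec_single_one, col_apply, Pi.single_apply, ite_div, one_div, zero_div,
    sum_ite_eq', mem_univ, if_true, sub_eq_zero] at hcrit
  rw [hcrit, mul_inv_cancel₀ (hp j).ne']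

end Matrix

theorem sinkhorn_exists_general (N : ℕ) (Y : Matrix (Fin N) (Fin N) ℝ)
    (hY : ∀ i j, 0 < Y i j) :
    ∃ d₁ d₂ : Fin N → ℝ, (∀ i, 0 < d₁ i) ∧ (∀ i, 0 < d₂ i) ∧
      IsDoublyStochastic (Matrix.diagonal d₁ * Y * Matrix.diagonal d₂) := by
  obtain ⟨p, hmin, hp⟩ := Matrix.exists_pos_isLocalMin_sinkhornPotential hY
  have hYp := Matrix.mulVec_pos hY hp
  refine ⟨fun i => ((Y.mulVec p) i)⁻¹, p, fun i => inv_pos.mpr (hYp i), hp, ?_, ?_, ?_⟩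
  · intro i j
    simp only [Matrix.diagonal_mul, Matrix.mul_diagonal]
    exact mul_nonneg (mul_nonneg (inv_pos.mpr (hYp i)).le (hY i j).le) (hp j).le
  · intro i
    simp only [Matrix.diagonal_mul, Matrix.mul_diagonal, mul_assoc, ← mul_sum]
    exact inv_mul_cancel₀ (hYp i).ne'
  · intro j
    rw [← Matrix.mul_sum_div_mulVec_eq_one_of_isLocalMin hY hmin hp j, mul_sum]
    simp only [Matrix.diagonal_mul, Matrix.mul_diagonal]
    exact sum_congr rfl fun i _ => by ring

/-- Existence part of Sinkhorn's theorem: every entrywise strictly positive square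
matrix can be scaled by positive diagonal matrices to a doubly stochastic matrix. -/
theorem sinkhorn_exists (N : ℕ) (hN : 1 ≤ N) (Y : Matrix (Fin N) (Fin N) ℝ)
    (hY : ∀ i j, 0 < Y i j) :
    ∃ d₁ d₂ : Fin N → ℝ, (∀ i, 0 < d₁ i) ∧ (∀ i, 0 < d₂ i) ∧
      IsDoublyStochastic (Matrix.diagonal d₁ * Y * Matrix.diagonal d₂) :=
  sinkhorn_exists_general N Y hY
end

section
/- Let N ≥ 1 and let Y be an N×N real matrix all of whose entries are strictly positive. If D₁, D₂ and D₁′, D₂′ are diagonal N×N matrices with strictly positive diagonal entries such that both D₁ · Y · D₂ and D₁′ · Y · D₂′ are doubly stochastic, then there exists a constant c > 0 such that D₁′ = c · D₁ and D₂′ = c⁻¹ · D₂. -/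
open Matrix Finset

theorem isDoublyStochastic_iff_mem_doublyStochastic {N : ℕ} (B : Matrix (Fin N) (Fin N) ℝ) :
    IsDoublyStochastic B ↔ B ∈ doublyStochastic ℝ (Fin N) :=
  mem_doublyStochastic_iff_sum.symm

section WeightedAverage

variable {ι : Type*} [Fintype ι] {w x : ι → ℝ} {a : ℝ}

theorem le_sum_mul_of_forall_le (hw : ∀ i, 0 ≤ w i) (hw₁ : ∑ i, w i = 1) (ha : ∀ i, a ≤ x i) :
    a ≤ ∑ i, w i * x i :=
  calc a = ∑ i, w i * a := by rw [← sum_mul, hw₁, one_mul]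
    _ ≤ ∑ i, w i * x i := sum_le_sum fun i _ => mul_le_mul_of_nonneg_left (ha i) (hw i)

theorem sum_mul_le_of_forall_le (hw : ∀ i, 0 ≤ w i) (hw₁ : ∑ i, w i = 1) (ha : ∀ i, x i ≤ a) :
    ∑ i, w i * x i ≤ a :=
  calc ∑ i, w i * x i ≤ ∑ i, w i * a :=
        sum_le_sum fun i _ => mul_le_mul_of_nonneg_left (ha i) (hw i)
    _ = a := by rw [← sum_mul, hw₁, one_mul]

theorem eq_of_sum_mul_eq_of_forall_le (hw : ∀ i, 0 < w i) (hw₁ : ∑ i, w i = 1)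
    (ha : ∀ i, a ≤ x i) (hsum : ∑ i, w i * x i = a) (i : ι) : x i = a := by
  have hle : ∀ j ∈ univ, w j * a ≤ w j * x j :=
    fun j _ => mul_le_mul_of_nonneg_left (ha j) (hw j).le
  have heq : ∑ j, w j * a = ∑ j, w j * x j := by rw [← sum_mul, hw₁, one_mul, hsum]
  exact (mul_left_cancel₀ (hw i).ne' ((sum_eq_sum_iff_of_le hle).mp heq i (mem_univ i))).symm

end WeightedAverage

section DiagonalScaling

variable {n : Type*} [Fintype n] [DecidableEq n] {A : Matrix n n ℝ} {r s : n → ℝ}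

theorem sum_row_diagonal_mul_mul_diagonal (r s : n → ℝ) (A : Matrix n n ℝ) (i : n) :
    ∑ j, (diagonal r * A * diagonal s) i j = r i * ∑ j, A i j * s j := by
  simp only [mul_diagonal, diagonal_mul, mul_sum, mul_assoc]

theorem sum_col_diagonal_mul_mul_diagonal (r s : n → ℝ) (A : Matrix n n ℝ) (j : n) :
    ∑ i, (diagonal r * A * diagonal s) i j = s j * ∑ i, A i j * r i := by
  simp only [mul_diagonal, diagonal_mul, mul_sum]
  exact sum_congr rfl fun i _ => by ring

theorem exists_eq_const_of_diagonal_mul_mul_diagonal_mem_doublyStochastic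
    (hA : A ∈ doublyStochastic ℝ n) (hApos : ∀ i j, 0 < A i j)
    (hr : ∀ i, 0 < r i) (hs : ∀ j, 0 < s j)
    (hB : diagonal r * A * diagonal s ∈ doublyStochastic ℝ n) :
    ∃ c : ℝ, 0 < c ∧ r = Function.const n c ∧ s = Function.const n c⁻¹ := by
  rcases isEmpty_or_nonempty n with hn | hn
  · exact ⟨1, one_pos, funext isEmptyElim, funext isEmptyElim⟩
  have hrow (i : n) : r i * ∑ j, A i j * s j = 1 := by
    rw [← sum_row_diagonal_mul_mul_diagonal, sum_row_of_mem_doublyStochastic hB]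
  have hcol (j : n) : s j * ∑ i, A i j * r i = 1 := by
    rw [← sum_col_diagonal_mul_mul_diagonal, sum_col_of_mem_doublyStochastic hB]
  have hAnonneg (i j : n) : 0 ≤ A i j := (hApos i j).le
  obtain ⟨i₀, hi₀⟩ := Finite.exists_max r
  obtain ⟨j₀, hj₀⟩ := Finite.exists_min s
  have hle : r i₀ * s j₀ ≤ 1 := hrow i₀ ▸ mul_le_mul_of_nonneg_left
    (le_sum_mul_of_forall_le (hAnonneg i₀) (sum_row_of_mem_doublyStochastic hA i₀) hj₀)
    (hr i₀).le
  have hge : 1 ≤ r i₀ * s j₀ := by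
    rw [mul_comm, ← hcol j₀]
    exact mul_le_mul_of_nonneg_left
      (sum_mul_le_of_forall_le (hAnonneg · j₀) (sum_col_of_mem_doublyStochastic hA j₀) hi₀)
      (hs j₀).le
  have hone : r i₀ * s j₀ = 1 := le_antisymm hle hge
  have hs_const (j : n) : s j = s j₀ :=
    eq_of_sum_mul_eq_of_forall_le (hApos i₀) (sum_row_of_mem_doublyStochastic hA i₀) hj₀
      (mul_left_cancel₀ (hr i₀).ne' ((hrow i₀).trans hone.symm)) j
  have hr_const (i : n) : r i = r i₀ := by
    have hsum : ∑ j, A i j * s j = s j₀ := by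
      simp only [hs_const, ← sum_mul, sum_row_of_mem_doublyStochastic hA i, one_mul]
    refine mul_right_cancel₀ (hs j₀).ne' ?_
    rw [← hsum, hrow i, hsum, hone]
  refine ⟨r i₀, hr i₀, funext hr_const, funext fun j => ?_⟩
  rw [hs_const j, Function.const_apply, eq_inv_of_mul_eq_one_right hone]

end DiagonalScaling

theorem sinkhorn_unique_up_to_constant_general (N : ℕ)
    (Y : Matrix (Fin N) (Fin N) ℝ) (hY : ∀ i j, 0 < Y i j)
    (d₁ d₂ d₁' d₂' : Fin N → ℝ)
    (hd₁ : ∀ i, 0 < d₁ i) (hd₂ : ∀ i, 0 < d₂ i)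
    (hd₁' : ∀ i, 0 < d₁' i) (hd₂' : ∀ i, 0 < d₂' i)
    (hDS : IsDoublyStochastic (Matrix.diagonal d₁ * Y * Matrix.diagonal d₂))
    (hDS' : IsDoublyStochastic (Matrix.diagonal d₁' * Y * Matrix.diagonal d₂')) :
    ∃ c : ℝ, 0 < c ∧
      Matrix.diagonal d₁' = c • Matrix.diagonal d₁ ∧
      Matrix.diagonal d₂' = c⁻¹ • Matrix.diagonal d₂ := by
  set r := d₁' / d₁
  set s := d₂' / d₂
  have hd₁'_eq : d₁' = r * d₁ := funext fun i => (div_mul_cancel₀ _ (hd₁ i).ne').symm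
  have hd₂'_eq : d₂' = d₂ * s := funext fun j => (mul_div_cancel₀ _ (hd₂ j).ne').symm
  have hscaled : diagonal d₁' * Y * diagonal d₂' =
      diagonal r * (diagonal d₁ * Y * diagonal d₂) * diagonal s := by
    ext i j
    simp only [hd₁'_eq, hd₂'_eq, mul_diagonal, diagonal_mul, Pi.mul_apply]
    ring
  rw [isDoublyStochastic_iff_mem_doublyStochastic] at hDS hDS'
  rw [hscaled] at hDS'
  obtain ⟨c, hc, hr, hs⟩ := exists_eq_const_of_diagonal_mul_mul_diagonal_mem_doublyStochastic (r := r) (s := s) hDS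
    (fun i j => by
      rw [mul_diagonal, diagonal_mul]
      exact mul_pos (mul_pos (hd₁ i) (hY i j)) (hd₂ j))
    (fun i => div_pos (hd₁' i) (hd₁ i)) (fun j => div_pos (hd₂' j) (hd₂ j)) hDS'
  refine ⟨c, hc, ?_, ?_⟩
  · rw [← diagonal_smul, hd₁'_eq, hr]
    rfl
  · rw [← diagonal_smul, hd₂'_eq, hs, mul_comm]
    rfl

/-- Uniqueness part of Sinkhorn's theorem: the positive diagonal scaling matrices
making a strictly positive matrix doubly stochastic are unique up to a
multiplicative constant. -/
theorem sinkhorn_unique_up_to_constant (N : ℕ) (hN : 1 ≤ N)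
    (Y : Matrix (Fin N) (Fin N) ℝ) (hY : ∀ i j, 0 < Y i j)
    (d₁ d₂ d₁' d₂' : Fin N → ℝ)
    (hd₁ : ∀ i, 0 < d₁ i) (hd₂ : ∀ i, 0 < d₂ i)
    (hd₁' : ∀ i, 0 < d₁' i) (hd₂' : ∀ i, 0 < d₂' i)
    (hDS : IsDoublyStochastic (Matrix.diagonal d₁ * Y * Matrix.diagonal d₂))
    (hDS' : IsDoublyStochastic (Matrix.diagonal d₁' * Y * Matrix.diagonal d₂')) :
    ∃ c : ℝ, 0 < c ∧
      Matrix.diagonal d₁' = c • Matrix.diagonal d₁ ∧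
      Matrix.diagonal d₂' = c⁻¹ • Matrix.diagonal d₂ :=
  sinkhorn_unique_up_to_constant_general N Y hY d₁ d₂ d₁' d₂' hd₁ hd₂ hd₁' hd₂' hDS hDS'
end

section
/- Let N ≥ 1 and let Y be an N×N real matrix all of whose entries are strictly positive. If D₁, D₂ and D₁′, D₂′ are diagonal N×N matrices with strictly positive diagonal entries such that both D₁ · Y · D₂ and D₁′ · Y · D₂′ are doubly stochastic, then D₁ · Y · D₂ = D₁′ · Y · D₂′. In other words, the doubly stochastic matrix obtained by diagonal scaling of Y is unique. -/
open Matrix Finset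

theorem IsDoublyStochastic.diagonal_mul_mul_diagonal_eq_self {N : ℕ}
    {B : Matrix (Fin N) (Fin N) ℝ} (hB : IsDoublyStochastic B) (hB_pos : ∀ i j, 0 < B i j)
    {a b : Fin N → ℝ} (ha : ∀ i, 0 < a i) (hb : ∀ j, 0 < b j)
    (hab : IsDoublyStochastic (diagonal a * B * diagonal b)) :
    diagonal a * B * diagonal b = B := by
  rcases isEmpty_or_nonempty (Fin N) with hN | hN
  · ext i; exact isEmptyElim i
  obtain ⟨i₀, hi₀⟩ := Finite.exists_max a
  obtain ⟨j₀, hj₀⟩ := Finite.exists_min b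
  have hrow := hab.2.1 i₀
  have hcol := hab.2.2 j₀
  simp only [mul_diagonal, diagonal_mul] at hrow hcol
  have hrow_le (j : Fin N) : a i₀ * B i₀ j * b j₀ ≤ a i₀ * B i₀ j * b j :=
    mul_le_mul_of_nonneg_left (hj₀ j) (mul_pos (ha i₀) (hB_pos i₀ j)).le
  have hcol_le (i : Fin N) : a i * B i j₀ * b j₀ ≤ a i₀ * B i j₀ * b j₀ :=
    mul_le_mul_of_nonneg_right (mul_le_mul_of_nonneg_right (hi₀ i) (hB_pos i j₀).le) (hb j₀).le
  have hrow_sum : ∑ j, a i₀ * B i₀ j * b j₀ = a i₀ * b j₀ := by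
    rw [← sum_mul, ← mul_sum, hB.2.1 i₀, mul_one]
  have hcol_sum : ∑ i, a i₀ * B i j₀ * b j₀ = a i₀ * b j₀ := by
    rw [← sum_mul, ← mul_sum, hB.2.2 j₀, mul_one]
  have hone : a i₀ * b j₀ = 1 := by
    apply le_antisymm
    · rw [← hrow_sum, ← hrow]; exact sum_le_sum fun j _ => hrow_le j
    · rw [← hcol_sum, ← hcol]; exact sum_le_sum fun i _ => hcol_le i
  have hb_const (j : Fin N) : b j = b j₀ := by
    have := (sum_eq_sum_iff_of_le fun j _ => hrow_le j).1 (by rw [hrow_sum, hrow, hone]) j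
      (mem_univ j)
    exact (mul_left_cancel₀ (mul_pos (ha i₀) (hB_pos i₀ j)).ne' this).symm
  have ha_const (i : Fin N) : a i = a i₀ := by
    have := (sum_eq_sum_iff_of_le fun i _ => hcol_le i).1 (by rw [hcol_sum, hcol, hone]) i
      (mem_univ i)
    exact mul_right_cancel₀ (hB_pos i j₀).ne' (mul_right_cancel₀ (hb j₀).ne' this)
  ext i j
  rw [mul_diagonal, diagonal_mul, ha_const i, hb_const j]
  linear_combination B i j * hone

theorem sinkhorn_scaling_unique_general (N : ℕ)
    (Y : Matrix (Fin N) (Fin N) ℝ) (hY : ∀ i j, 0 < Y i j)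
    (d₁ d₂ d₁' d₂' : Fin N → ℝ)
    (hd₁ : ∀ i, 0 < d₁ i) (hd₂ : ∀ i, 0 < d₂ i)
    (hd₁' : ∀ i, 0 < d₁' i) (hd₂' : ∀ i, 0 < d₂' i)
    (hDS : IsDoublyStochastic (Matrix.diagonal d₁ * Y * Matrix.diagonal d₂))
    (hDS' : IsDoublyStochastic (Matrix.diagonal d₁' * Y * Matrix.diagonal d₂')) :
    Matrix.diagonal d₁ * Y * Matrix.diagonal d₂ =
      Matrix.diagonal d₁' * Y * Matrix.diagonal d₂' := by
  have hpos (i j : Fin N) : 0 < (diagonal d₁' * Y * diagonal d₂') i j := by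
    rw [mul_diagonal, diagonal_mul]
    exact mul_pos (mul_pos (hd₁' i) (hY i j)) (hd₂' j)
  have hscale : diagonal d₁ * Y * diagonal d₂ =
      diagonal (d₁ / d₁') * (diagonal d₁' * Y * diagonal d₂') * diagonal (d₂ / d₂') := by
    ext i j
    simp only [mul_diagonal, diagonal_mul, Pi.div_apply]
    field_simp [(hd₁' i).ne', (hd₂' j).ne']
  rw [hscale] at hDS ⊢
  exact hDS'.diagonal_mul_mul_diagonal_eq_self hpos (fun i => div_pos (hd₁ i) (hd₁' i))
    (fun j => div_pos (hd₂ j) (hd₂' j)) hDS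

/-- Consequence of Sinkhorn's theorem: the doubly stochastic matrix obtained by
positive diagonal scaling of an entrywise strictly positive matrix is unique. -/
theorem sinkhorn_scaling_unique (N : ℕ) (hN : 1 ≤ N)
    (Y : Matrix (Fin N) (Fin N) ℝ) (hY : ∀ i j, 0 < Y i j)
    (d₁ d₂ d₁' d₂' : Fin N → ℝ)
    (hd₁ : ∀ i, 0 < d₁ i) (hd₂ : ∀ i, 0 < d₂ i)
    (hd₁' : ∀ i, 0 < d₁' i) (hd₂' : ∀ i, 0 < d₂' i)
    (hDS : IsDoublyStochastic (Matrix.diagonal d₁ * Y * Matrix.diagonal d₂))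
    (hDS' : IsDoublyStochastic (Matrix.diagonal d₁' * Y * Matrix.diagonal d₂')) :
    Matrix.diagonal d₁ * Y * Matrix.diagonal d₂ =
      Matrix.diagonal d₁' * Y * Matrix.diagonal d₂' :=
  sinkhorn_scaling_unique_general N Y hY d₁ d₂ d₁' d₂' hd₁ hd₂ hd₁' hd₂' hDS hDS'
end

section
/- Let N ≥ 1, let C be an N×N real matrix, and let β > 0. Then the unique minimizer of S_{β,C}(B) := ⟨C, B⟩_F − (1/β)·H(B) over the set of N×N doubly stochastic matrices has all entries strictly positive. -/
/-- The Frobenius inner product `⟨X, Y⟩_F = Σ_{ij} X_{ij} Y_{ij}`. -/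
def frob {N : ℕ} (X Y : Matrix (Fin N) (Fin N) ℝ) : ℝ :=
  ∑ i, ∑ j, X i j * Y i j

/-- The entropy `H(B) = -Σ_{ij} B_{ij} log B_{ij}` (with `0 log 0 = 0`, which is
automatic since `Real.log 0 = 0`). -/
noncomputable def entH {N : ℕ} (B : Matrix (Fin N) (Fin N) ℝ) : ℝ :=
  -∑ i, ∑ j, B i j * Real.log (B i j)

/-- The entropy-regularized objective `S_{β,C}(B) = ⟨C, B⟩_F - (1/β) H(B)`. -/
noncomputable def Sobj {N : ℕ} (β : ℝ) (C B : Matrix (Fin N) (Fin N) ℝ) : ℝ :=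
  frob C B - (1 / β) * entH B

/-! If a doubly stochastic `B` had `B k l = 0`, move it towards the uniform matrix `U`:
`B_t = (1 - t) B + t U` stays doubly stochastic, and convexity of `x log x`, computed exactly at the
zero entry, gives `S(B_t) ≤ S(B) + t (S(U) - S(B) + log t / (N β))`. Since `log t → -∞`, the
bracket is negative for small `t`, contradicting minimality. -/

open Real Finset Filter Matrix Topology

lemma isDoublyStochastic_iff_mem {N : ℕ} {B : Matrix (Fin N) (Fin N) ℝ} :
    IsDoublyStochastic B ↔ B ∈ doublyStochastic ℝ (Fin N) :=
  mem_doublyStochastic_iff_sum.symm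

lemma uniform_mem_doublyStochastic {n : Type*} [Fintype n] [DecidableEq n] [Nonempty n] :
    (of fun _ _ => (Fintype.card n : ℝ)⁻¹ : Matrix n n ℝ) ∈ doublyStochastic ℝ n := by
  have hcard : (Fintype.card n : ℝ) ≠ 0 := Nat.cast_ne_zero.2 Fintype.card_ne_zero
  refine mem_doublyStochastic_iff_sum.2
    ⟨fun _ _ => inv_nonneg.2 (Nat.cast_nonneg _), fun _ => ?_, fun _ => ?_⟩ <;> simp [hcard]

lemma frob_add_smul {N : ℕ} (C B U : Matrix (Fin N) (Fin N) ℝ) (a b : ℝ) :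
    frob C (a • B + b • U) = a * frob C B + b * frob C U := by
  simp only [frob, mul_sum, ← sum_add_distrib, Matrix.add_apply, Matrix.smul_apply, smul_eq_mul]
  exact sum_congr rfl fun _ _ => sum_congr rfl fun _ _ => by ring

lemma entH_eq_neg_sum_prod {N : ℕ} (B : Matrix (Fin N) (Fin N) ℝ) :
    entH B = -∑ x : Fin N × Fin N, B x.1 x.2 * log (B x.1 x.2) := by
  rw [entH, Fintype.sum_prod_type' fun i j => B i j * log (B i j)]

/-- At a zero `p k = 0` the convexity bound improves by `t q k log t`: there `x log x` has
slope `-∞`. -/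
lemma sum_mul_log_convexComb_le {ι : Type*} [Fintype ι] {p q : ι → ℝ} (hp : ∀ i, 0 ≤ p i)
    (hq : ∀ i, 0 ≤ q i) {k : ι} (hk : p k = 0) {t : ℝ} (ht0 : 0 < t) (ht1 : t ≤ 1) :
    ∑ i, ((1 - t) * p i + t * q i) * log ((1 - t) * p i + t * q i) ≤
      (1 - t) * ∑ i, p i * log (p i) + t * ∑ i, q i * log (q i) + t * q k * log t := by
  classical
  have hconv : ∀ i, ((1 - t) * p i + t * q i) * log ((1 - t) * p i + t * q i) ≤
      (1 - t) * (p i * log (p i)) + t * (q i * log (q i)) :=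
    fun i => convexOn_mul_log.2 (hp i) (hq i) (by linarith) ht0.le (by ring)
  have hzero : ((1 - t) * p k + t * q k) * log ((1 - t) * p k + t * q k) =
      (1 - t) * (p k * log (p k)) + t * (q k * log (q k)) + t * q k * log t := by
    rcases (hq k).eq_or_lt with hqk | hqk
    · simp [hk, ← hqk]
    · rw [hk, mul_zero, zero_add, log_mul ht0.ne' hqk.ne']
      ring
  have hrest := sum_le_sum fun i (_ : i ∈ univ.erase k) => hconv i
  rw [sum_add_distrib, ← mul_sum, ← mul_sum] at hrest
  rw [← add_sum_erase univ _ (mem_univ k), ← add_sum_erase univ (fun i => p i * log (p i))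
    (mem_univ k), ← add_sum_erase univ (fun i => q i * log (q i)) (mem_univ k), hzero]
  linarith

lemma Sobj_convexComb_le {N : ℕ} {β : ℝ} (hβ : 0 ≤ β) (C : Matrix (Fin N) (Fin N) ℝ)
    {B U : Matrix (Fin N) (Fin N) ℝ} (hB : ∀ i j, 0 ≤ B i j) (hU : ∀ i j, 0 ≤ U i j)
    {k l : Fin N} (hkl : B k l = 0) {t : ℝ} (ht0 : 0 < t) (ht1 : t ≤ 1) :
    Sobj β C ((1 - t) • B + t • U) ≤
      (1 - t) * Sobj β C B + t * Sobj β C U + t * U k l * log t / β := by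
  have hent := sum_mul_log_convexComb_le (p := fun x : Fin N × Fin N => B x.1 x.2)
    (q := fun x => U x.1 x.2) (fun x => hB x.1 x.2) (fun x => hU x.1 x.2) (k := (k, l)) hkl ht0 ht1
  have hscaled := mul_le_mul_of_nonneg_left hent (one_div_nonneg.2 hβ)
  simp only [Sobj, frob_add_smul, entH_eq_neg_sum_prod, Matrix.add_apply, Matrix.smul_apply,
    smul_eq_mul]
  linear_combination hscaled

lemma exists_pos_le_one_add_mul_log_neg (a : ℝ) {c : ℝ} (hc : 0 < c) :
    ∃ t, 0 < t ∧ t ≤ 1 ∧ a + c * log t < 0 := by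
  have hlim : Tendsto (fun t => a + c * log t) (𝓝[>] 0) atBot :=
    tendsto_atBot_add_const_left _ a (tendsto_log_nhdsGT_zero.const_mul_atBot hc)
  have hIoc : ∀ᶠ t in 𝓝[>] (0 : ℝ), t ∈ Set.Ioc 0 1 := Ioc_mem_nhdsGT one_pos
  obtain ⟨t, ⟨ht0, ht1⟩, hneg⟩ := (hIoc.and (hlim.eventually_lt_atBot 0)).exists
  exact ⟨t, ht0, ht1, hneg⟩

/-- Any minimizer of the entropy-regularized objective `S_{β,C}` over the set of
doubly stochastic matrices has all entries strictly positive. -/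
theorem sobj_minimizer_pos (N : ℕ) (hN : 1 ≤ N)
    (C : Matrix (Fin N) (Fin N) ℝ) (β : ℝ) (hβ : 0 < β)
    (B : Matrix (Fin N) (Fin N) ℝ) (hB : IsDoublyStochastic B)
    (hmin : ∀ B' : Matrix (Fin N) (Fin N) ℝ, IsDoublyStochastic B' →
      Sobj β C B ≤ Sobj β C B') :
    ∀ i j, 0 < B i j := by
  intro k l
  by_contra! hkl
  have hzero : B k l = 0 := le_antisymm hkl (hB.1 k l)
  have : Nonempty (Fin N) := ⟨⟨0, hN⟩⟩
  set U : Matrix (Fin N) (Fin N) ℝ := of fun _ _ => (Fintype.card (Fin N) : ℝ)⁻¹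
  have hU : IsDoublyStochastic U := isDoublyStochastic_iff_mem.2 uniform_mem_doublyStochastic
  obtain ⟨t, ht0, ht1, hdescent⟩ := exists_pos_le_one_add_mul_log_neg
    (Sobj β C U - Sobj β C B) (c := U k l / β) (div_pos (by simp [U]; omega) hβ)
  have hBt := hmin _ <| isDoublyStochastic_iff_mem.2 <| convex_doublyStochastic (a := 1 - t)
    (b := t) (isDoublyStochastic_iff_mem.1 hB) (isDoublyStochastic_iff_mem.1 hU) (by linarith)
    ht0.le (by ring)
  have hle := Sobj_convexComb_le hβ.le C hB.1 hU.1 hzero ht0 ht1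
  have hdrop := mul_neg_of_pos_of_neg ht0 hdescent
  have hsplit : (1 - t) * Sobj β C B + t * Sobj β C U + t * U k l * log t / β =
      Sobj β C B + t * (Sobj β C U - Sobj β C B + U k l / β * log t) := by ring
  linarith
end

section
/- Let N ≥ 1, let C be an N×N real matrix, and let β > 0. Let B̂ be the unique minimizer of S_{β,C}(B) := ⟨C, B⟩_F − (1/β)·H(B) over the set of N×N doubly stochastic matrices. Then there exist diagonal N×N matrices D₁ and D₂ with strictly positive diagonal entries such that B̂ = D₁ · exp(−βC) · D₂, where exp(−βC) denotes the matrix with entries e^{−β C_{ij}}. Equivalently, B̂ is the unique doubly stochastic diagonal scaling of the entrywise positive matrix exp(−βC). -/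
/-!
Moving mass `t` around a `2 × 2` cycle `(i, j), (i', j'), (i, j'), (i', j)` keeps a matrix doubly
stochastic, and by the tangent-line inequality for `x log x` it changes `β * Sobj` by at most `t`
times the slope `β (C i j + C i' j' - C i j' - C i' j) + log` of the cross-ratio of the moved
entries. If a minimizer had a zero entry `(i, j)`, the `log t` in this slope would make it
negative for small `t > 0`; so all entries are positive, both orientations of every cycle are
admissible, and the slope at `t = 0` vanishes. Hence `β C + log Bhat` has the form `u i + v j`,
i.e. `Bhat` is a diagonal scaling of `exp (-β C)`.
-/

open Real Matrix Filter Topology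

theorem mul_log_sub_mul_log_le {x y : ℝ} (hx : 0 < x) (hy : 0 ≤ y) :
    x * log x - y * log y ≤ (x - y) * (log x + 1) := by
  rcases hy.eq_or_lt with rfl | hy
  · rw [zero_mul, sub_zero, sub_zero, mul_add]
    linarith
  have h := log_le_sub_one_of_pos (div_pos hx hy)
  rw [log_div hx.ne' hy.ne', le_sub_iff_add_le, le_div_iff₀ hy] at h
  nlinarith

section Cycle

variable {m n R : Type*} [DecidableEq m] [DecidableEq n] [Ring R]

def cycleMatrix (i i' : m) (j j' : n) : Matrix m n R :=
  vecMulVec (Pi.single i 1 - Pi.single i' 1) (Pi.single j 1 - Pi.single j' 1)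

variable [Fintype n] in
theorem sum_cycleMatrix_row (i i' : m) (j j' : n) (p : m) :
    ∑ q, cycleMatrix i i' j j' p q = (0 : R) := by
  simp [cycleMatrix, vecMulVec_apply, ← Finset.mul_sum, Finset.sum_sub_distrib]

variable [Fintype m] in
theorem sum_cycleMatrix_col (i i' : m) (j j' : n) (q : n) :
    ∑ p, cycleMatrix i i' j j' p q = (0 : R) := by
  simp [cycleMatrix, vecMulVec_apply, ← Finset.sum_mul, Finset.sum_sub_distrib]

theorem cycleMatrix_corners {i i' : m} {j j' : n} (hi : i ≠ i') (hj : j ≠ j') :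
    cycleMatrix i i' j j' i j = (1 : R) ∧ cycleMatrix i i' j j' i' j' = (1 : R) ∧
      cycleMatrix i i' j j' i j' = (-1 : R) ∧ cycleMatrix i i' j j' i' j = (-1 : R) := by
  simp [cycleMatrix, vecMulVec_apply, hi, hj, hi.symm, hj.symm]

theorem cycleMatrix_apply_eq_zero {i i' p : m} {j j' q : n}
    (h : p ≠ i ∧ p ≠ i' ∨ q ≠ j ∧ q ≠ j') : cycleMatrix i i' j j' p q = (0 : R) := by
  rcases h with ⟨h₁, h₂⟩ | ⟨h₁, h₂⟩ <;>
    simp [cycleMatrix, vecMulVec_apply, Pi.single_apply, h₁, h₂]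

end Cycle

section Perturbation

variable {m n : Type*} [DecidableEq m] [DecidableEq n] {B : Matrix m n ℝ} {i i' : m} {j j' : n}

theorem forall_add_smul_cycleMatrix_apply (P : ℝ → ℝ → Prop) (hi : i ≠ i') (hj : j ≠ j')
    (t : ℝ) (hP : ∀ p q, P (B p q) (B p q)) (h₁ : P (B i j + t) (B i j))
    (h₂ : P (B i' j' + t) (B i' j')) (h₃ : P (B i j' - t) (B i j'))
    (h₄ : P (B i' j - t) (B i' j)) :
    ∀ p q, P ((B + t • cycleMatrix i i' j j' : Matrix m n ℝ) p q) (B p q) := by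
  obtain ⟨e₁, e₂, e₃, e₄⟩ := cycleMatrix_corners (R := ℝ) hi hj
  intro p q
  simp only [Matrix.add_apply, Matrix.smul_apply, smul_eq_mul]
  by_cases hp : p = i ∨ p = i'
  · by_cases hq : q = j ∨ q = j'
    · rcases hp with rfl | rfl <;> rcases hq with rfl | rfl <;>
        simpa [e₁, e₂, e₃, e₄, sub_eq_add_neg]
    · simpa [cycleMatrix_apply_eq_zero (Or.inr (not_or.1 hq))] using hP p q
  · simpa [cycleMatrix_apply_eq_zero (Or.inl (not_or.1 hp))] using hP p q

end Perturbation

section Objective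

variable {N : ℕ} {β : ℝ} {C B : Matrix (Fin N) (Fin N) ℝ}

theorem frob_smul_left (c : ℝ) (X Y : Matrix (Fin N) (Fin N) ℝ) :
    frob (c • X) Y = c * frob X Y := by
  simp only [frob, Matrix.smul_apply, smul_eq_mul, mul_assoc, Finset.mul_sum]

theorem frob_cycleMatrix (i i' j j' : Fin N) (X : Matrix (Fin N) (Fin N) ℝ) :
    frob (cycleMatrix i i' j j') X = X i j + X i' j' - X i j' - X i' j := by
  simp [frob, cycleMatrix, vecMulVec_apply, sub_mul, Finset.sum_sub_distrib, Pi.single_apply]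
  ring

theorem Sobj_eq_sum (β : ℝ) (C B : Matrix (Fin N) (Fin N) ℝ) :
    Sobj β C B = ∑ p, ∑ q, (C p q * B p q + β⁻¹ * (B p q * log (B p q))) := by
  simp only [Sobj, frob, entH, one_div, mul_neg, sub_neg_eq_add, Finset.mul_sum,
    ← Finset.sum_add_distrib]

theorem Sobj_sub_le_frob (hβ : 0 ≤ β) (C : Matrix (Fin N) (Fin N) ℝ)
    {B B' : Matrix (Fin N) (Fin N) ℝ} (hB : ∀ p q, 0 ≤ B p q)
    (hB' : ∀ p q, B' p q ≠ B p q → 0 < B' p q) :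
    Sobj β C B' - Sobj β C B ≤
      frob (B' - B) (of fun p q => C p q + β⁻¹ * (log (B' p q) + 1)) := by
  simp only [Sobj_eq_sum, frob, ← Finset.sum_sub_distrib]
  gcongr with p _ q _
  have key : B' p q * log (B' p q) - B p q * log (B p q)
      ≤ (B' p q - B p q) * (log (B' p q) + 1) := by
    by_cases h : B' p q = B p q
    · simp [h]
    · exact mul_log_sub_mul_log_le (hB' p q h) (hB p q)
  have := mul_le_mul_of_nonneg_left key (inv_nonneg.2 hβ)
  simp only [Matrix.sub_apply, of_apply]
  linarith

theorem IsDoublyStochastic.add_smul_cycleMatrix (hB : IsDoublyStochastic B) {i i' j j' : Fin N}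
    (hi : i ≠ i') (hj : j ≠ j') {t : ℝ} (h₁ : 0 ≤ B i j + t) (h₂ : 0 ≤ B i' j' + t)
    (h₃ : t ≤ B i j') (h₄ : t ≤ B i' j) :
    IsDoublyStochastic (B + t • cycleMatrix i i' j j') := by
  obtain ⟨hnonneg, hrow, hcol⟩ := hB
  refine ⟨forall_add_smul_cycleMatrix_apply (fun x _ => 0 ≤ x) hi hj t hnonneg h₁ h₂
    (sub_nonneg.2 h₃) (sub_nonneg.2 h₄), fun p => ?_, fun q => ?_⟩
  · simp [Finset.sum_add_distrib, ← Finset.mul_sum, sum_cycleMatrix_row, hrow]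
  · simp [Finset.sum_add_distrib, ← Finset.mul_sum, sum_cycleMatrix_col, hcol]

/-- The derivative of `s ↦ β * Sobj β C (B + s • cycleMatrix i i' j j')` at `s = t`. -/
noncomputable def cycleSlope (β : ℝ) (C B : Matrix (Fin N) (Fin N) ℝ) (i i' j j' : Fin N)
    (t : ℝ) : ℝ :=
  β * (C i j + C i' j' - C i j' - C i' j) + log (B i j + t) + log (B i' j' + t)
    - log (B i j' - t) - log (B i' j - t)

theorem Sobj_add_smul_cycleMatrix_le (hβ : 0 < β) (C : Matrix (Fin N) (Fin N) ℝ)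
    (hB : ∀ p q, 0 ≤ B p q) {i i' j j' : Fin N} (hi : i ≠ i') (hj : j ≠ j') {t : ℝ}
    (h₁ : 0 < B i j + t) (h₂ : 0 < B i' j' + t) (h₃ : 0 < B i j' - t)
    (h₄ : 0 < B i' j - t) :
    β * (Sobj β C (B + t • cycleMatrix i i' j j') - Sobj β C B) ≤
      t * cycleSlope β C B i i' j j' t := by
  have h := Sobj_sub_le_frob hβ.le C hB <| forall_add_smul_cycleMatrix_apply
    (fun x y => x ≠ y → 0 < x) hi hj t (fun _ _ h => (h rfl).elim) (fun _ => h₁)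
    (fun _ => h₂) (fun _ => h₃) (fun _ => h₄)
  obtain ⟨e₁, e₂, e₃, e₄⟩ := cycleMatrix_corners (R := ℝ) hi hj
  rw [add_sub_cancel_left, frob_smul_left, frob_cycleMatrix] at h
  simp only [of_apply, Matrix.add_apply, Matrix.smul_apply, smul_eq_mul, e₁, e₂, e₃, e₄,
    mul_one, mul_neg, ← sub_eq_add_neg] at h
  calc _ ≤ β * _ := mul_le_mul_of_nonneg_left h hβ.le
    _ = _ := by field_simp; rw [cycleSlope]; ring

theorem continuousAt_cycleSlope {i i' j j' : Fin N} (hpos : ∀ p q, 0 < B p q) :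
    ContinuousAt (cycleSlope β C B i i' j j') 0 := by
  unfold cycleSlope
  fun_prop (disch := simp [(hpos _ _).ne'])

theorem eventually_cycleSlope_nonneg (hβ : 0 < β) (hB : IsDoublyStochastic B)
    (hmin : IsMinOn (Sobj β C) {B | IsDoublyStochastic B} B) {i i' j j' : Fin N}
    (hi : i ≠ i') (hj : j ≠ j') (hb : 0 < B i j') (hc : 0 < B i' j) :
    ∀ᶠ t in 𝓝[>] 0, 0 ≤ cycleSlope β C B i i' j j' t := by
  filter_upwards [Ioo_mem_nhdsGT (lt_min hb hc)] with t ⟨ht, htbc⟩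
  have htb : t < B i j' := htbc.trans_le (min_le_left _ _)
  have htc : t < B i' j := htbc.trans_le (min_le_right _ _)
  have ha := hB.1 i j
  have hd := hB.1 i' j'
  have hle := isMinOn_iff.1 hmin _ <|
    hB.add_smul_cycleMatrix hi hj (by linarith) (by linarith) htb.le htc.le
  have hdesc := Sobj_add_smul_cycleMatrix_le hβ C hB.1 hi hj (t := t) (by linarith)
    (by linarith) (by linarith) (by linarith)
  exact nonneg_of_mul_nonneg_right (hdesc.trans' (mul_nonneg hβ.le (sub_nonneg.2 hle))) ht

theorem pos_of_isMinOn (hβ : 0 < β) (hB : IsDoublyStochastic B)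
    (hmin : IsMinOn (Sobj β C) {B | IsDoublyStochastic B} B) (i j : Fin N) : 0 < B i j := by
  by_contra! h
  have ha : B i j = 0 := le_antisymm h (hB.1 i j)
  obtain ⟨j', -, hb⟩ : ∃ j' ∈ Finset.univ, 0 < B i j' :=
    Finset.exists_lt_of_sum_lt (by simp [hB.2.1 i])
  obtain ⟨i', -, hc⟩ : ∃ i' ∈ Finset.univ, 0 < B i' j :=
    Finset.exists_lt_of_sum_lt (by simp [hB.2.2 j])
  have hi : i ≠ i' := by rintro rfl; linarith
  have hj : j ≠ j' := by rintro rfl; linarith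
  -- `log (B i' j' + t) ≤ B i' j' + t` bounds the slope above even when `B i' j' = 0`.
  have hlim : Tendsto (fun t => log t + (β * (C i j + C i' j' - C i j' - C i' j) + (B i' j' + t)
      - log (B i j' - t) - log (B i' j - t))) (𝓝[>] 0) atBot := by
    refine tendsto_log_nhdsGT_zero.atBot_add (ContinuousAt.tendsto ?_ |>.mono_left
      nhdsWithin_le_nhds)
    fun_prop (disch := simp [hb.ne', hc.ne'])
  obtain ⟨t, hslope, hneg, ht⟩ := ((eventually_cycleSlope_nonneg hβ hB hmin hi hj hb hc).and
    ((hlim.eventually_lt_atBot 0).and self_mem_nhdsWithin)).exists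
  rw [cycleSlope, ha, zero_add] at hslope
  linarith [log_le_self (add_nonneg (hB.1 i' j') ht.le)]

theorem log_quadrangle_of_isMinOn (hβ : 0 < β) (hB : IsDoublyStochastic B)
    (hmin : IsMinOn (Sobj β C) {B | IsDoublyStochastic B} B) (i i' j j' : Fin N) :
    β * C i j + log (B i j) + (β * C i' j' + log (B i' j'))
      = β * C i j' + log (B i j') + (β * C i' j + log (B i' j)) := by
  have hpos := pos_of_isMinOn hβ hB hmin
  have slope_nonneg {j j' : Fin N} (hi : i ≠ i') (hj : j ≠ j') :
      0 ≤ cycleSlope β C B i i' j j' 0 :=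
    ge_of_tendsto ((continuousAt_cycleSlope hpos).tendsto.mono_left nhdsWithin_le_nhds)
      (eventually_cycleSlope_nonneg hβ hB hmin hi hj (hpos _ _) (hpos _ _))
  rcases eq_or_ne i i' with rfl | hi
  · ring
  rcases eq_or_ne j j' with rfl | hj
  · ring
  have h₁ := slope_nonneg hi hj
  have h₂ := slope_nonneg hi hj.symm
  simp only [cycleSlope, add_zero, sub_zero] at h₁ h₂
  linarith

end Objective

theorem exists_diagonal_scaling {m n : Type*} [Fintype m] [DecidableEq m] [Fintype n]
    [DecidableEq n] {B K : Matrix m n ℝ} (hB : ∀ p q, 0 < B p q) (hK : ∀ p q, 0 < K p q)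
    (p₀ : m) (q₀ : n) (h : ∀ p q, log (B p q) - log (K p q) + (log (B p₀ q₀) - log (K p₀ q₀))
      = log (B p q₀) - log (K p q₀) + (log (B p₀ q) - log (K p₀ q))) :
    ∃ (d₁ : m → ℝ) (d₂ : n → ℝ), (∀ i, 0 < d₁ i) ∧ (∀ j, 0 < d₂ j) ∧
      B = diagonal d₁ * K * diagonal d₂ := by
  refine ⟨fun p => exp (log (B p q₀) - log (K p q₀) - (log (B p₀ q₀) - log (K p₀ q₀))),
    fun q => exp (log (B p₀ q) - log (K p₀ q)), fun _ => exp_pos _, fun _ => exp_pos _, ?_⟩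
  ext p q
  rw [mul_diagonal, diagonal_mul, ← exp_log (hB p q)]
  conv_rhs => rw [← exp_log (hK p q), ← exp_add, ← exp_add]
  congr 1
  linarith [h p q]

/-- Theorem 2 of the paper: the minimizer of the entropy-regularized Frobenius
inner product over doubly stochastic matrices is the doubly stochastic diagonal
scaling of the entrywise positive matrix `exp(-βC)`. -/
theorem sobj_minimizer_is_sinkhorn_scaling (N : ℕ) (hN : 1 ≤ N)
    (C : Matrix (Fin N) (Fin N) ℝ) (β : ℝ) (hβ : 0 < β)
    (Bhat : Matrix (Fin N) (Fin N) ℝ) (hB : IsDoublyStochastic Bhat)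
    (hmin : ∀ B' : Matrix (Fin N) (Fin N) ℝ, IsDoublyStochastic B' →
      Sobj β C Bhat ≤ Sobj β C B') :
    ∃ d₁ d₂ : Fin N → ℝ, (∀ i, 0 < d₁ i) ∧ (∀ i, 0 < d₂ i) ∧
      Bhat = Matrix.diagonal d₁ *
        (Matrix.of fun i j => Real.exp (-β * C i j)) * Matrix.diagonal d₂ := by
  have hmin' : IsMinOn (Sobj β C) {B | IsDoublyStochastic B} Bhat := isMinOn_iff.2 hmin
  refine exists_diagonal_scaling (pos_of_isMinOn hβ hB hmin') (fun _ _ => exp_pos _)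
    ⟨0, hN⟩ ⟨0, hN⟩ fun p q => ?_
  simp only [of_apply, log_exp]
  linarith [log_quadrangle_of_isMinOn hβ hB hmin' p ⟨0, hN⟩ q ⟨0, hN⟩]
end
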